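/- Let 0 ≤ s < e be integers and {ω_t} a real sequence on (s, e] that is piecewise constant with exactly two change-points η_r < η_{r+1} in (s, e): ω takes value a on (s, η_r], value c on (η_r, η_{r+1}], and value g on (η_{r+1}, e]. Then max_{s<t<e} |ω̃_t^{(s,e]}| ≤ sqrt(e − η_{r+1}) |g − c| + sqrt(η_r − s) |a − c|, where ω̃_t^{(s,e]} is the CUSUM statistic. -/

import Mathlib

/-! The CUSUM statistic at `t` is the inner product of `ω` on `(s, e]` with a contrast vector
that is constant on `(s, t]` and on `(t, e]`, sums to zero and has unit Euclidean norm.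
Subtracting the middle level `c` therefore does not change it, and leaves `a - c` on `(s, η₁]`,
`0` on `(η₁, η₂]` and `g - c` on `(η₂, e]`. By Cauchy–Schwarz, any `n` entries of a unit vector
sum to at most `√n` in absolute value. -/

/-- The CUSUM statistic of a real sequence `ω` over the integer interval `(s, e]`. -/
noncomputable def cusum (s e : ℕ) (ω : ℕ → ℝ) (t : ℕ) : ℝ :=
  Real.sqrt (((e : ℝ) - t) / (((e : ℝ) - s) * ((t : ℝ) - s))) * ∑ l ∈ Finset.Ioc s t, ω l -
    Real.sqrt (((t : ℝ) - s) / (((e : ℝ) - s) * ((e : ℝ) - t))) * ∑ l ∈ Finset.Ioc t e, ω l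

open Finset Real

theorem sqrt_div_mul_sub_eq {s t e : ℝ} (hst : s < t) (hte : t < e) :
    √((e - t) / ((e - s) * (t - s))) * (t - s) = √((t - s) / ((e - s) * (e - t))) * (e - t) := by
  have sqrt_mul_eq (x y : ℝ) (hy : 0 ≤ y) : √x * y = √(x * y ^ 2) := by
    rw [sqrt_mul' _ (sq_nonneg y), sqrt_sq hy]
  rw [sqrt_mul_eq _ _ (sub_pos.2 hst).le, sqrt_mul_eq _ _ (sub_pos.2 hte).le]
  congr 1
  field_simp [(sub_pos.2 hst).ne', (sub_pos.2 hte).ne', (sub_pos.2 (hst.trans hte)).ne']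

theorem sum_Ioc_eq_sub_mul {m n : ℕ} (hmn : m ≤ n) {f : ℕ → ℝ} {v : ℝ}
    (h : ∀ l ∈ Ioc m n, f l = v) : ∑ l ∈ Ioc m n, f l = ((n : ℝ) - m) * v := by
  rw [sum_congr rfl h, sum_const, Nat.card_Ioc, nsmul_eq_mul, Nat.cast_sub hmn]

noncomputable def cusumWeight (s e t l : ℕ) : ℝ :=
  if l ≤ t then √(((e : ℝ) - t) / (((e : ℝ) - s) * ((t : ℝ) - s)))
  else -√(((t : ℝ) - s) / (((e : ℝ) - s) * ((e : ℝ) - t)))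

section

variable {s e t : ℕ}

theorem cusumWeight_of_le {l : ℕ} (hl : l ≤ t) :
    cusumWeight s e t l = √(((e : ℝ) - t) / (((e : ℝ) - s) * ((t : ℝ) - s))) :=
  if_pos hl

theorem cusumWeight_of_lt {l : ℕ} (hl : t < l) :
    cusumWeight s e t l = -√(((t : ℝ) - s) / (((e : ℝ) - s) * ((e : ℝ) - t))) :=
  if_neg hl.not_ge

theorem cusum_eq_sum_cusumWeight_mul (hst : s ≤ t) (hte : t ≤ e) (ω : ℕ → ℝ) :
    cusum s e ω t = ∑ l ∈ Ioc s e, cusumWeight s e t l * ω l := by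
  rw [← sum_Ioc_consecutive _ hst hte, cusum, mul_sum, mul_sum, sub_eq_add_neg, ← sum_neg_distrib]
  congr 1 <;> refine sum_congr rfl fun l hl => ?_ <;> rw [mem_Ioc] at hl
  · rw [cusumWeight_of_le hl.2]
  · rw [cusumWeight_of_lt hl.1, neg_mul]

theorem sum_cusumWeight (hst : s < t) (hte : t < e) : ∑ l ∈ Ioc s e, cusumWeight s e t l = 0 := by
  rw [← sum_Ioc_consecutive _ hst.le hte.le,
    sum_Ioc_eq_sub_mul hst.le fun l hl => cusumWeight_of_le (mem_Ioc.1 hl).2,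
    sum_Ioc_eq_sub_mul hte.le fun l hl => cusumWeight_of_lt (mem_Ioc.1 hl).1]
  have := sqrt_div_mul_sub_eq (Nat.cast_lt.2 hst) (Nat.cast_lt.2 hte)
  linarith

theorem sum_cusumWeight_sq (hst : s < t) (hte : t < e) :
    ∑ l ∈ Ioc s e, cusumWeight s e t l ^ 2 = 1 := by
  have hts : (0 : ℝ) < t - s := sub_pos.2 (Nat.cast_lt.2 hst)
  have het : (0 : ℝ) < e - t := sub_pos.2 (Nat.cast_lt.2 hte)
  have hes : (0 : ℝ) < e - s := hts.trans_le (by linarith)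
  rw [← sum_Ioc_consecutive _ hst.le hte.le,
    sum_Ioc_eq_sub_mul hst.le fun l hl => by rw [cusumWeight_of_le (mem_Ioc.1 hl).2],
    sum_Ioc_eq_sub_mul hte.le fun l hl => by rw [cusumWeight_of_lt (mem_Ioc.1 hl).1],
    neg_sq, sq_sqrt (div_pos het (mul_pos hes hts)).le, sq_sqrt (div_pos hts (mul_pos hes het)).le]
  field_simp
  ring

theorem abs_sum_cusumWeight_le_sqrt_card (hst : s < t) (hte : t < e) {J : Finset ℕ}
    (hJ : J ⊆ Ioc s e) : |∑ l ∈ J, cusumWeight s e t l| ≤ √(#J : ℝ) := by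
  refine abs_le_sqrt ?_
  calc (∑ l ∈ J, cusumWeight s e t l) ^ 2 ≤ #J * ∑ l ∈ J, cusumWeight s e t l ^ 2 :=
        sq_sum_le_card_mul_sum_sq
    _ ≤ #J * ∑ l ∈ Ioc s e, cusumWeight s e t l ^ 2 := by gcongr
    _ = #J := by simp only [sum_cusumWeight_sq hst hte, mul_one]

theorem cusum_eq_of_two_changepoints {η₁ η₂ : ℕ} (h1 : s ≤ η₁) (h2 : η₁ ≤ η₂) (h3 : η₂ ≤ e)
    {a c g : ℝ} {ω : ℕ → ℝ}
    (hωa : ∀ l, s < l → l ≤ η₁ → ω l = a)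
    (hωc : ∀ l, η₁ < l → l ≤ η₂ → ω l = c)
    (hωg : ∀ l, η₂ < l → l ≤ e → ω l = g) (hst : s < t) (hte : t < e) :
    cusum s e ω t = (a - c) * ∑ l ∈ Ioc s η₁, cusumWeight s e t l +
      (g - c) * ∑ l ∈ Ioc η₂ e, cusumWeight s e t l := by
  have centred : ∑ l ∈ Ioc s e, cusumWeight s e t l * ω l =
      ∑ l ∈ Ioc s e, cusumWeight s e t l * (ω l - c) := by
    simp only [mul_sub, sum_sub_distrib, ← sum_mul, sum_cusumWeight hst hte, zero_mul, sub_zero]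
  have middle : ∑ l ∈ Ioc η₁ η₂, cusumWeight s e t l * (ω l - c) = 0 :=
    sum_eq_zero fun l hl => by
      rw [hωc l (mem_Ioc.1 hl).1 (mem_Ioc.1 hl).2, sub_self, mul_zero]
  rw [cusum_eq_sum_cusumWeight_mul hst.le hte.le, centred, ← sum_Ioc_consecutive _ h1 (h2.trans h3),
    ← sum_Ioc_consecutive _ h2 h3, middle, zero_add, mul_sum, mul_sum]
  congr 1 <;> refine sum_congr rfl fun l hl => ?_ <;> rw [mem_Ioc] at hl
  · rw [hωa l hl.1 hl.2, mul_comm]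
  · rw [hωg l hl.1 hl.2, mul_comm]

end

/-- If `ω` is piecewise constant on `(s, e]` with exactly two change-points
`η₁ < η₂` (value `a` on `(s, η₁]`, `c` on `(η₁, η₂]`, `g` on `(η₂, e]`), then
`max_{s<t<e} |cusum t| ≤ sqrt(e − η₂)·|g − c| + sqrt(η₁ − s)·|a − c|`. -/
theorem stmt9 (s e η₁ η₂ : ℕ) (h1 : s < η₁) (h2 : η₁ < η₂) (h3 : η₂ < e)
    (a c g : ℝ) (ω : ℕ → ℝ)
    (hωa : ∀ t, s < t → t ≤ η₁ → ω t = a)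
    (hωc : ∀ t, η₁ < t → t ≤ η₂ → ω t = c)
    (hωg : ∀ t, η₂ < t → t ≤ e → ω t = g) :
    ∀ t, s < t → t < e →
      |cusum s e ω t| ≤
        Real.sqrt ((e : ℝ) - η₂) * |g - c| + Real.sqrt ((η₁ : ℝ) - s) * |a - c| := by
  intro t hst hte
  have hleft := abs_sum_cusumWeight_le_sqrt_card hst hte (Ioc_subset_Ioc_right (h2.trans h3).le)
  have hright := abs_sum_cusumWeight_le_sqrt_card hst hte (Ioc_subset_Ioc_left (h1.trans h2).le)
  rw [Nat.card_Ioc, Nat.cast_sub h1.le] at hleft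
  rw [Nat.card_Ioc, Nat.cast_sub h3.le] at hright
  rw [cusum_eq_of_two_changepoints h1.le h2.le h3.le hωa hωc hωg hst hte]
  calc _ ≤ |a - c| * |∑ l ∈ Ioc s η₁, cusumWeight s e t l| +
          |g - c| * |∑ l ∈ Ioc η₂ e, cusumWeight s e t l| :=
        (abs_add_le _ _).trans_eq (by rw [abs_mul, abs_mul])
    _ ≤ |a - c| * √((η₁ : ℝ) - s) + |g - c| * √((e : ℝ) - η₂) := by gcongr
    _ = _ := by ring
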